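/- Let {c_n}_{n∈ℕ} be a sequence with c_n ∈ (0,1/2), and for each k ∈ ℕ₀ let C^k be the generalised Cantor set generated by the shifted sequence {c_{n+k}}_{n∈ℕ}. Then the collection {C^k}_{k∈ℕ₀} is the pullback attractor of the non-autonomous iterated function system on ℝ given by f_{2k−1}(x) = c_k x and f_{2k}(x) = c_k x + 1 − c_k with index sets I_k = {2k−1, 2k} for each k ∈ ℕ. -/

import Mathlib

open Set Metric Filter Bornology MeasureTheory
open scoped ENNReal NNReal

/-!
Level `n + 1` of the construction of `C^k` is `S^k` applied to level `n` of the construction of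
`C^{k+1}`, and the levels decrease. Since `S^k` is the union of two injective maps, it commutes
with decreasing intersections, which gives the invariance `C^k = S^k(C^{k+1})`. For attraction,
`S^k` shrinks by the factor `c_{k+1} ≤ 1/2` the distance from a point to its nearest point of
`S^k(F)`. Starting from `F = C^{k+n}`, which contains `0`, every point of `S^{k,k+n}(B)` lies
within `2^{-n} sup |B|` of `S^{k,k+n}(C^{k+n}) = C^k`.
-/

/-- `cantorPre c k n = S^{k,k+n}([0,1])` : level-`n` of the construction of the
generalised Cantor set generated by the shifted sequence `{c_{m+k}}_{m∈ℕ}`,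
using the maps `x ↦ c_j x` and `x ↦ c_j x + 1 - c_j`.  Equivalently,
`cantorPre c k (n+1) = gen_{c_{k+n+1}}(cantorPre c k n)`. -/
def cantorPre (c : ℕ → ℝ) : ℕ → ℕ → Set ℝ
  | _, 0 => Set.Icc 0 1
  | k, n + 1 =>
      (fun x => c (k + 1) * x) '' cantorPre c (k + 1) n ∪
      (fun x => c (k + 1) * x + 1 - c (k + 1)) '' cantorPre c (k + 1) n

/-- `genCantor c k` is the generalised Cantor set generated by the sequence
`{c_{n+k}}_{n∈ℕ}`. -/
def genCantor (c : ℕ → ℝ) (k : ℕ) : Set ℝ :=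
  ⋂ n, cantorPre c k n

/-- The index sets `I_k = {2k-1, 2k}`. -/
def gcIndex (k : ℕ) : Finset ℕ := {2 * k - 1, 2 * k}

/-- The maps of the system: `f_{2k-1}(x) = c_k x` and
`f_{2k}(x) = c_k x + 1 - c_k`. -/
noncomputable def gcMap (c : ℕ → ℝ) (i : ℕ) : ℝ → ℝ :=
  if i % 2 = 1 then fun x => c ((i + 1) / 2) * x
  else fun x => c (i / 2) * x + 1 - c (i / 2)

/-- `S^k(B) = ⋃_{i ∈ I_{k+1}} f_i(B)` for this system. -/
noncomputable def gcSstep (c : ℕ → ℝ) (k : ℕ) (B : Set ℝ) : Set ℝ :=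
  ⋃ i ∈ gcIndex (k + 1), gcMap c i '' B

/-- `gcSiter c k n B = S^{k,k+n}(B)`. -/
noncomputable def gcSiter (c : ℕ → ℝ) : ℕ → ℕ → Set ℝ → Set ℝ
  | _, 0, B => B
  | k, n + 1, B => gcSstep c k (gcSiter c (k + 1) n B)

/-- Hausdorff semi-distance `ρ_H(A,B) = sup_{x ∈ A} inf_{y ∈ B} |x - y|`. -/
noncomputable def semidist (A B : Set ℝ) : ℝ≥0∞ :=
  ⨆ x ∈ A, EMetric.infEdist x B

/-- `{F^k}` is a pullback attractor of the above non-autonomous IFS. -/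
def IsPullbackAttractorGC (c : ℕ → ℝ) (F : ℕ → Set ℝ) : Prop :=
  (∀ k, IsCompact (F k)) ∧
  IsBounded (⋃ k, F k) ∧
  (∀ k, F k = gcSstep c k (F (k + 1))) ∧
  (∀ B : Set ℝ, IsBounded B → ∀ k,
    Tendsto (fun l => semidist (gcSiter c k (l - k) B) (F k)) atTop (nhds 0))

lemma gcSstep_eq_union (c : ℕ → ℝ) (k : ℕ) (B : Set ℝ) :
    gcSstep c k B = (fun x => c (k + 1) * x) '' B ∪
      (fun x => c (k + 1) * x + 1 - c (k + 1)) '' B := by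
  have hodd : gcMap c (2 * (k + 1) - 1) = fun x => c (k + 1) * x := by
    have hmod : (2 * (k + 1) - 1) % 2 = 1 := by omega
    have hdiv : (2 * (k + 1) - 1 + 1) / 2 = k + 1 := by omega
    simp only [gcMap, hmod, hdiv, if_true]
  have heven : gcMap c (2 * (k + 1)) = fun x => c (k + 1) * x + 1 - c (k + 1) := by
    have hmod : 2 * (k + 1) % 2 = 0 := by omega
    have hdiv : 2 * (k + 1) / 2 = k + 1 := by omega
    simp only [gcMap, hmod, hdiv, zero_ne_one, if_false]
  simp only [gcSstep, gcIndex, Finset.mem_insert, Finset.mem_singleton, iUnion_iUnion_eq_or_left,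
    iUnion_iUnion_eq_left, hodd, heven]

lemma cantorPre_succ (c : ℕ → ℝ) (k n : ℕ) :
    cantorPre c k (n + 1) = gcSstep c k (cantorPre c (k + 1) n) :=
  (gcSstep_eq_union c k _).symm

open scoped Topology

section

variable {c : ℕ → ℝ}

lemma gcSstep_mono (k : ℕ) {A B : Set ℝ} (h : A ⊆ B) : gcSstep c k A ⊆ gcSstep c k B := by
  simp only [gcSstep_eq_union]
  exact union_subset_union (image_mono h) (image_mono h)

lemma gcSstep_Icc_subset {k : ℕ} (hc : c (k + 1) ∈ Icc 0 1) :
    gcSstep c k (Icc 0 1) ⊆ Icc 0 1 := by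
  obtain ⟨hc0, hc1⟩ := hc
  rw [gcSstep_eq_union]
  rintro _ (⟨x, ⟨hx0, hx1⟩, rfl⟩ | ⟨x, ⟨hx0, hx1⟩, rfl⟩) <;> constructor <;> nlinarith

lemma cantorPre_antitone (hc : ∀ n, c (n + 1) ∈ Icc 0 1) (k : ℕ) :
    Antitone (cantorPre c k) := by
  suffices h : ∀ n k, cantorPre c k (n + 1) ⊆ cantorPre c k n from
    antitone_nat_of_succ_le fun n => h n k
  intro n
  induction n with
  | zero => exact fun k => (cantorPre_succ c k 0).trans_subset (gcSstep_Icc_subset (hc k))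
  | succ n ih =>
    intro k
    rw [cantorPre_succ c k (n + 1), cantorPre_succ c k n]
    exact gcSstep_mono k (ih (k + 1))

lemma zero_mem_cantorPre (n k : ℕ) : (0 : ℝ) ∈ cantorPre c k n := by
  induction n generalizing k with
  | zero => exact ⟨le_rfl, zero_le_one⟩
  | succ n ih => exact Or.inl ⟨0, ih (k + 1), mul_zero _⟩

lemma zero_mem_genCantor (k : ℕ) : (0 : ℝ) ∈ genCantor c k :=
  mem_iInter.2 fun n => zero_mem_cantorPre n k

lemma genCantor_subset_Icc (k : ℕ) : genCantor c k ⊆ Icc 0 1 :=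
  iInter_subset (cantorPre c k) 0

lemma isCompact_cantorPre (n k : ℕ) : IsCompact (cantorPre c k n) := by
  induction n generalizing k with
  | zero => exact isCompact_Icc
  | succ n ih =>
    exact ((ih (k + 1)).image (by fun_prop)).union ((ih (k + 1)).image (by fun_prop))

lemma isCompact_genCantor (k : ℕ) : IsCompact (genCantor c k) :=
  isCompact_Icc.of_isClosed_subset
    (isClosed_iInter fun n => (isCompact_cantorPre n k).isClosed) (genCantor_subset_Icc k)

lemma genCantor_eq_gcSstep (hc : ∀ n, c (n + 1) ∈ Ioc 0 1) (k : ℕ) :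
    genCantor c k = gcSstep c k (genCantor c (k + 1)) := by
  have hIcc : ∀ n, c (n + 1) ∈ Icc 0 1 := fun n => Ioc_subset_Icc_self (hc n)
  have hanti := cantorPre_antitone hIcc (k + 1)
  have hne : c (k + 1) ≠ 0 := (hc k).1.ne'
  have hinj₁ : (fun x => c (k + 1) * x).Injective := mul_right_injective₀ hne
  have hinj₂ : (fun x => c (k + 1) * x + 1 - c (k + 1)).Injective := fun x y h => by
    simpa [hne] using h
  calc genCantor c k = ⋂ n, cantorPre c k (n + 1) :=
        ((cantorPre_antitone hIcc k).iInter_nat_add 1).symm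
    _ = (⋂ n, (fun x => c (k + 1) * x) '' cantorPre c (k + 1) n) ∪
          ⋂ n, (fun x => c (k + 1) * x + 1 - c (k + 1)) '' cantorPre c (k + 1) n :=
        iInter_union_of_antitone (fun _ _ h => image_mono (hanti h))
          (fun _ _ h => image_mono (hanti h))
    _ = gcSstep c k (genCantor c (k + 1)) := by
        rw [gcSstep_eq_union, genCantor, hinj₁.injOn.image_iInter_eq, hinj₂.injOn.image_iInter_eq]

lemma gcSiter_genCantor (hc : ∀ n, c (n + 1) ∈ Ioc 0 1) (n k : ℕ) :
    gcSiter c k n (genCantor c (k + n)) = genCantor c k := by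
  induction n generalizing k with
  | zero => rfl
  | succ n ih =>
    rw [gcSiter, show k + (n + 1) = k + 1 + n by omega, ih (k + 1), ← genCantor_eq_gcSstep hc]

lemma gcSstep_approx {k : ℕ} {q r : ℝ} (hq : |c (k + 1)| ≤ q) {A F : Set ℝ}
    (h : ∀ a ∈ A, ∃ b ∈ F, |a - b| ≤ r) :
    ∀ x ∈ gcSstep c k A, ∃ y ∈ gcSstep c k F, |x - y| ≤ q * r := by
  have hscale : ∀ a b, |a - b| ≤ r → |c (k + 1) * (a - b)| ≤ q * r := fun a b hab => by
    rw [abs_mul]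
    exact mul_le_mul hq hab (abs_nonneg _) ((abs_nonneg _).trans hq)
  rw [gcSstep_eq_union, gcSstep_eq_union]
  rintro _ (⟨a, ha, rfl⟩ | ⟨a, ha, rfl⟩) <;> obtain ⟨b, hb, hab⟩ := h a ha
  · exact ⟨_, Or.inl ⟨b, hb, rfl⟩, by simpa only [mul_sub] using hscale a b hab⟩
  · refine ⟨_, Or.inr ⟨b, hb, rfl⟩, ?_⟩
    convert hscale a b hab using 2
    ring

lemma gcSiter_approx {q r : ℝ} (hq : ∀ n, |c (n + 1)| ≤ q) (n k : ℕ) {A F : Set ℝ}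
    (h : ∀ a ∈ A, ∃ b ∈ F, |a - b| ≤ r) :
    ∀ x ∈ gcSiter c k n A, ∃ y ∈ gcSiter c k n F, |x - y| ≤ q ^ n * r := by
  induction n generalizing k with
  | zero => simpa only [gcSiter, pow_zero, one_mul] using h
  | succ n ih =>
    simpa only [gcSiter, pow_succ', mul_assoc] using gcSstep_approx (hq k) (ih (k + 1))

lemma semidist_le_ofReal {A F : Set ℝ} {r : ℝ} (h : ∀ x ∈ A, ∃ y ∈ F, |x - y| ≤ r) :
    semidist A F ≤ ENNReal.ofReal r := by
  refine iSup₂_le fun x hx => ?_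
  obtain ⟨y, hy, hxy⟩ := h x hx
  calc infEDist x F ≤ edist x y := infEDist_le_edist_of_mem hy
    _ = ENNReal.ofReal |x - y| := by rw [edist_dist, Real.dist_eq]
    _ ≤ ENNReal.ofReal r := ENNReal.ofReal_le_ofReal hxy

lemma tendsto_semidist_gcSiter_genCantor {q : ℝ} (hc : ∀ n, c (n + 1) ∈ Ioc 0 q) (hq : q < 1)
    {B : Set ℝ} (hB : IsBounded B) (k : ℕ) :
    Tendsto (fun n => semidist (gcSiter c k n B) (genCantor c k)) atTop (𝓝 0) := by
  have hq0 : 0 ≤ q := (hc 0).1.le.trans (hc 0).2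
  have hc1 : ∀ n, c (n + 1) ∈ Ioc 0 1 := fun n => Ioc_subset_Ioc_right hq.le (hc n)
  obtain ⟨R, hR⟩ := isBounded_iff_forall_norm_le.1 hB
  have hbound : ∀ n, semidist (gcSiter c k n B) (genCantor c k) ≤ ENNReal.ofReal (q ^ n * R) := by
    intro n
    refine semidist_le_ofReal ?_
    rw [← gcSiter_genCantor hc1 n k]
    refine gcSiter_approx (fun n => (abs_of_pos (hc n).1).trans_le (hc n).2) n k fun b hb => ?_
    exact ⟨0, zero_mem_genCantor _, by simpa only [sub_zero, Real.norm_eq_abs] using hR b hb⟩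
  have hlim : Tendsto (fun n => ENNReal.ofReal (q ^ n * R)) atTop (𝓝 0) := by
    rw [← ENNReal.ofReal_zero, ← zero_mul R]
    exact ENNReal.tendsto_ofReal ((tendsto_pow_atTop_nhds_zero_of_lt_one hq0 hq).mul_const R)
  exact tendsto_of_tendsto_of_tendsto_of_le_of_le tendsto_const_nhds hlim (fun _ => zero_le)
    hbound

end

/-- The family of generalised Cantor sets `C^k`, where `C^k` is
generated by the shifted sequence `{c_{n+k}}_{n∈ℕ}`, is the pullback attractor
of the non-autonomous IFS `f_{2k-1}(x) = c_k x`, `f_{2k}(x) = c_k x + 1 - c_k`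
with `I_k = {2k-1, 2k}`. -/
theorem genCantor_isPullbackAttractor (c : ℕ → ℝ)
    (hc : ∀ n, 1 ≤ n → 0 < c n ∧ c n < 1 / 2) :
    IsPullbackAttractorGC c (fun k => genCantor c k) := by
  have hc_half : ∀ n, c (n + 1) ∈ Ioc 0 (1 / 2) := fun n =>
    have h := hc (n + 1) (Nat.le_add_left 1 n)
    ⟨h.1, h.2.le⟩
  have hc1 : ∀ n, c (n + 1) ∈ Ioc 0 1 := fun n => Ioc_subset_Ioc_right (by norm_num) (hc_half n)
  refine ⟨isCompact_genCantor, ?_, genCantor_eq_gcSstep hc1, fun B hB k => ?_⟩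
  · exact (isBounded_Icc 0 1).subset (iUnion_subset genCantor_subset_Icc)
  · exact (tendsto_semidist_gcSiter_genCantor hc_half (by norm_num) hB k).comp
      (tendsto_sub_atTop_nat k)
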